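/- For a graph G of order n ≥ 2, SEC(G) = 2 if and only if G ≅ K₂ or G is the edgeless graph on n vertices. -/

import Mathlib

namespace SecCoal

/-- `D` is a dominating set of `G`. -/
def IsDominating {V : Type*} (G : SimpleGraph V) (D : Set V) : Prop :=
  ∀ v ∉ D, ∃ u ∈ D, G.Adj u v

/-- `S` is a secure dominating set of `G`. -/
def IsSecureDominating {V : Type*} (G : SimpleGraph V) (S : Set V) : Prop :=
  IsDominating G S ∧
    ∀ u ∉ S, ∃ v ∈ S, G.Adj v u ∧ IsDominating G ((S \ {v}) ∪ {u})

/-- Degree of a vertex. -/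
noncomputable def deg {V : Type*} (G : SimpleGraph V) (v : V) : ℕ :=
  (G.neighborSet v).ncard

/-- Minimum degree. -/
noncomputable def minDeg {V : Type*} (G : SimpleGraph V) : ℕ :=
  sInf (Set.range (deg G))

/-- Maximum degree. -/
noncomputable def maxDeg {V : Type*} (G : SimpleGraph V) : ℕ :=
  sSup (Set.range (deg G))

/-- `π` is a secure coalition partition of `G`. -/
def IsSecPartition {V : Type*} (G : SimpleGraph V) (π : Finset (Set V)) : Prop :=
  Setoid.IsPartition (↑π : Set (Set V)) ∧
    ∀ A ∈ π,
      (∃ v, A = {v} ∧ deg G v = Nat.card V - 1 ∧ IsSecureDominating G A) ∨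
      (¬ IsSecureDominating G A ∧
        ∃ B ∈ π, B ≠ A ∧ IsSecureDominating G (A ∪ B))

/-- The secure coalition number of `G`. -/
noncomputable def SEC {V : Type*} (G : SimpleGraph V) : ℕ :=
  sSup {k | ∃ π : Finset (Set V), IsSecPartition G π ∧ π.card = k}

/-- Two disjoint sets form a secure coalition. -/
def FormsSecCoalition {V : Type*} (G : SimpleGraph V) (A B : Set V) : Prop :=
  Disjoint A B ∧ ¬ IsSecureDominating G A ∧ ¬ IsSecureDominating G B ∧
    IsSecureDominating G (A ∪ B)

/-- The domination number of `G`. -/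
noncomputable def gammaDom {V : Type*} (G : SimpleGraph V) : ℕ :=
  sInf {k | ∃ D : Set V, IsDominating G D ∧ D.ncard = k}

/-- The secure domination number of `G`. -/
noncomputable def secDomNum {V : Type*} (G : SimpleGraph V) : ℕ :=
  sInf {k | ∃ S : Set V, IsSecureDominating G S ∧ S.ncard = k}

/-- `π` is a coalition partition (w.r.t. domination) of `G`. -/
def IsCoalitionPartition {V : Type*} (G : SimpleGraph V) (π : Finset (Set V)) : Prop :=
  Setoid.IsPartition (↑π : Set (Set V)) ∧
    ∀ A ∈ π,
      (∃ v, A = {v} ∧ IsDominating G A) ∨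
      (¬ IsDominating G A ∧ ∃ B ∈ π, B ≠ A ∧ IsDominating G (A ∪ B))

/-- The coalition number of `G`. -/
noncomputable def CNum {V : Type*} (G : SimpleGraph V) : ℕ :=
  sSup {k | ∃ π : Finset (Set V), IsCoalitionPartition G π ∧ π.card = k}

/-- The secure coalition graph of `G` w.r.t. a partition `π`. -/
def SCG {V : Type*} (G : SimpleGraph V) (π : Finset (Set V)) :
    SimpleGraph {A : Set V // A ∈ π} where
  Adj A B := FormsSecCoalition G A.1 B.1
  symm := by
    constructor
    rintro A B ⟨hd, h1, h2, h3⟩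
    exact ⟨hd.symm, h2, h1, by rwa [Set.union_comm]⟩
  loopless := by
    constructor
    rintro A ⟨hd, h1, h2, h3⟩
    exact h1 (by simpa using h3)

end SecCoal

/-!
Parts of a partition are nonempty, so `SEC G ≤ n`, and the singletons show `SEC Kₙ = n`.
In the edgeless graph only `V` itself is secure dominating and no vertex has degree `n - 1`,
so every part must complete another part to `V`: there are at most two parts, and
`{v}, V \ {v}` realizes two. Otherwise `G` has an edge; if moreover `G ≠ Kₙ`, take a maximal
non-secure-dominating set `U` containing all isolated vertices. No singleton is secure
dominating, and each completes `U` to a secure dominating set, so `U` together with the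
singletons outside it is a secure coalition partition. Since `V \ {x}` is secure dominating
as soon as `x` has a neighbour, at least two vertices lie outside `U`, whence `SEC G ≥ 3`.
-/

namespace SecCoal

variable {V : Type*} {G : SimpleGraph V}

lemma isDominating_bot_iff {D : Set V} : IsDominating ⊥ D ↔ D = Set.univ := by
  refine ⟨fun h => Set.eq_univ_of_forall fun v => ?_, fun h v hv => (hv (h ▸ trivial)).elim⟩
  by_contra hv
  obtain ⟨_, _, hadj⟩ := h v hv
  exact hadj

lemma isSecureDominating_univ (G : SimpleGraph V) : IsSecureDominating G Set.univ :=
  ⟨fun _ hv => (hv trivial).elim, fun _ hu => (hu trivial).elim⟩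

lemma isSecureDominating_bot_iff {S : Set V} : IsSecureDominating ⊥ S ↔ S = Set.univ :=
  ⟨fun h => isDominating_bot_iff.1 h.1, fun h => h ▸ isSecureDominating_univ ⊥⟩

lemma isSecureDominating_singleton_iff {w : V} : IsSecureDominating G {w} ↔ G = ⊤ := by
  refine ⟨fun h => ?_, ?_⟩
  · ext a b
    refine ⟨G.ne_of_adj, fun hab => ?_⟩
    -- either `a = w` dominates `b`, or `a` replaces `w` and must dominate `b` on its own
    obtain rfl | haw := eq_or_ne a w
    · obtain ⟨u, rfl, hadj⟩ := h.1 b hab.symm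
      exact hadj
    · obtain ⟨v, rfl, -, hdom⟩ := h.2 a haw
      obtain ⟨u, hu, hadj⟩ := hdom b (by simpa using hab.symm)
      rwa [show u = a by simpa using hu] at hadj
  · rintro rfl
    refine ⟨fun v hv => ⟨w, rfl, Ne.symm hv⟩, fun u hu => ⟨w, rfl, Ne.symm hu, ?_⟩⟩
    intro v hv
    exact ⟨u, by simp, by simpa [eq_comm] using hv⟩

lemma isSecureDominating_compl_singleton {x y : V} (h : G.Adj x y) :
    IsSecureDominating G {x}ᶜ := by
  have hyx : y ≠ x := G.ne_of_adj h.symm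
  refine ⟨fun v hv => ⟨y, hyx, ?_⟩, fun u hu => ?_⟩
  · obtain rfl : v = x := by simpa using hv
    exact h.symm
  obtain rfl : u = x := by simpa using hu
  refine ⟨y, hyx, h.symm, fun v hv => ⟨u, by simp, ?_⟩⟩
  obtain rfl : v = y := by
    by_contra hvy
    obtain rfl | hvu := eq_or_ne v u <;> simp_all
  exact h

lemma deg_top [Finite V] (v : V) : deg ⊤ v = Nat.card V - 1 := by
  rw [deg, SimpleGraph.neighborSet_top, Set.ncard_compl, Set.ncard_singleton]

lemma deg_bot (v : V) : deg ⊥ v = 0 := by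
  rw [deg, SimpleGraph.neighborSet_bot, Set.ncard_empty]

lemma card_le_of_isPartition [Fintype V] {π : Finset (Set V)}
    (hπ : Setoid.IsPartition (π : Set (Set V))) : π.card ≤ Fintype.card V := by
  choose f hf using fun A : π => Setoid.nonempty_of_mem_partition hπ A.2
  rw [← Fintype.card_coe]
  refine Fintype.card_le_of_injective f fun A B hAB => Subtype.ext ?_
  exact hπ.pairwiseDisjoint.elim A.2 B.2 (Set.not_disjoint_iff.2 ⟨f A, hf A, hAB ▸ hf B⟩)

lemma subset_pair_of_isPartition {π : Finset (Set V)}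
    (hπ : Setoid.IsPartition (π : Set (Set V))) {A B : Set V} (hA : A ∈ π) (hB : B ∈ π)
    (hAB : A ∪ B = Set.univ) : π ⊆ {A, B} := by
  intro C hC
  obtain ⟨c, hc⟩ := Setoid.nonempty_of_mem_partition hπ hC
  have hmeet {D : Set V} (hD : D ∈ π) (hcD : c ∈ D) : C = D :=
    hπ.pairwiseDisjoint.elim hC hD (Set.not_disjoint_iff.2 ⟨c, hc, hcD⟩)
  rcases (hAB.symm ▸ Set.mem_univ c : c ∈ A ∪ B) with hcA | hcB
  · simp [hmeet hA hcA]
  · simp [hmeet hB hcB]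

open Classical in
noncomputable def insertSingletons [Finite V] (U : Set V) : Finset (Set V) :=
  insert U (Uᶜ.toFinite.toFinset.image singleton)

section insertSingletons

variable [Finite V] {U A : Set V}

lemma mem_insertSingletons : A ∈ insertSingletons U ↔ A = U ∨ ∃ z ∉ U, A = {z} := by
  simp [insertSingletons, eq_comm]

lemma isPartition_insertSingletons (hU : U.Nonempty) :
    Setoid.IsPartition (insertSingletons U : Set (Set V)) := by
  refine ⟨?_, fun v => ?_⟩
  · rw [Finset.mem_coe, mem_insertSingletons]
    rintro (h | ⟨z, -, h⟩)
    · exact hU.ne_empty h.symm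
    · exact Set.singleton_ne_empty z h.symm
  · simp only [Finset.mem_coe, mem_insertSingletons]
    by_cases hv : v ∈ U
    · refine ⟨U, ⟨Or.inl rfl, hv⟩, ?_⟩
      rintro B ⟨rfl | ⟨z, hz, rfl⟩, hvB⟩
      · rfl
      · exact (hz (Set.mem_singleton_iff.1 hvB ▸ hv)).elim
    · refine ⟨{v}, ⟨Or.inr ⟨v, hv, rfl⟩, rfl⟩, ?_⟩
      rintro B ⟨rfl | ⟨z, hz, rfl⟩, hvB⟩
      · exact (hv hvB).elim
      · rw [Set.mem_singleton_iff.1 hvB]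

lemma card_insertSingletons : (insertSingletons U).card = Uᶜ.ncard + 1 := by
  classical
  rw [insertSingletons, Finset.card_insert_of_notMem, Finset.card_image_of_injective _
    Set.singleton_injective, Set.ncard_eq_toFinset_card]
  simp only [Finset.mem_image, Set.Finite.mem_toFinset]
  rintro ⟨z, hz, rfl⟩
  exact hz rfl

end insertSingletons

lemma IsSecPartition.card_le_SEC [Fintype V] {π : Finset (Set V)} (hπ : IsSecPartition G π) :
    π.card ≤ SEC G := by
  refine le_csSup ⟨Fintype.card V, ?_⟩ ⟨π, hπ, rfl⟩
  rintro k ⟨σ, hσ, rfl⟩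
  exact card_le_of_isPartition hσ.1

lemma isSecPartition_insertSingletons [Finite V] {U : Set V} (hG : G ≠ ⊤) (hU : U.Nonempty)
    (hUsd : ¬ IsSecureDominating G U) (hins : ∀ x ∉ U, IsSecureDominating G (insert x U)) :
    IsSecPartition G (insertSingletons U) := by
  refine ⟨isPartition_insertSingletons hU, fun A hA => Or.inr ?_⟩
  obtain rfl | ⟨z, hz, rfl⟩ := mem_insertSingletons.1 hA
  · obtain ⟨x, hx⟩ : ∃ x, x ∉ A := by
      by_contra! h
      exact hUsd (Set.eq_univ_of_forall h ▸ isSecureDominating_univ G)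
    refine ⟨hUsd, {x}, mem_insertSingletons.2 (Or.inr ⟨x, hx, rfl⟩), ?_, ?_⟩
    · rintro rfl
      exact hx rfl
    · simpa [Set.union_singleton] using hins x hx
  · refine ⟨mt isSecureDominating_singleton_iff.1 hG, U, mem_insertSingletons.2 (Or.inl rfl), ?_,
      by simpa [Set.singleton_union] using hins z hz⟩
    rintro rfl
    exact hz rfl

lemma isSecPartition_top_insertSingletons [Finite V] (v : V) :
    IsSecPartition (⊤ : SimpleGraph V) (insertSingletons {v}) := by
  refine ⟨isPartition_insertSingletons (Set.singleton_nonempty v), fun A hA => Or.inl ?_⟩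
  obtain ⟨w, rfl⟩ : ∃ w, A = {w} := by
    obtain rfl | ⟨z, -, rfl⟩ := mem_insertSingletons.1 hA <;> exact ⟨_, rfl⟩
  exact ⟨w, rfl, deg_top w, isSecureDominating_singleton_iff.2 rfl⟩

lemma SEC_eq_of_isSecPartition {π : Finset (Set V)} {k : ℕ} (hπ : IsSecPartition G π)
    (hk : π.card = k) (hle : ∀ σ, IsSecPartition G σ → σ.card ≤ k) : SEC G = k :=
  IsGreatest.csSup_eq ⟨⟨π, hπ, hk⟩, by rintro _ ⟨σ, hσ, rfl⟩; exact hle σ hσ⟩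

lemma SEC_top [Fintype V] [Nonempty V] : SEC (⊤ : SimpleGraph V) = Fintype.card V := by
  inhabit V
  refine SEC_eq_of_isSecPartition (isSecPartition_top_insertSingletons default) ?_
    fun σ hσ => card_le_of_isPartition hσ.1
  rw [card_insertSingletons, Set.ncard_compl, Set.ncard_singleton, Nat.card_eq_fintype_card]
  have : 0 < Fintype.card V := Fintype.card_pos
  omega

lemma IsSecPartition.card_le_two_of_bot [Finite V] (hn : 1 < Nat.card V) {σ : Finset (Set V)}
    (hσ : IsSecPartition ⊥ σ) : σ.card ≤ 2 := by
  obtain rfl | ⟨A, hA⟩ := σ.eq_empty_or_nonempty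
  · simp
  rcases hσ.2 A hA with ⟨v, -, hdeg, -⟩ | ⟨-, B, hB, -, hsec⟩
  · rw [deg_bot] at hdeg
    omega
  · exact (Finset.card_le_card (subset_pair_of_isPartition hσ.1 hA hB
      (isSecureDominating_bot_iff.1 hsec))).trans Finset.card_le_two

lemma SEC_bot [Fintype V] (hn : 2 ≤ Fintype.card V) : SEC (⊥ : SimpleGraph V) = 2 := by
  have : Nontrivial V := Fintype.one_lt_card_iff_nontrivial.1 hn
  obtain ⟨v⟩ := (inferInstance : Nonempty V)
  have hpart : IsSecPartition ⊥ (insertSingletons {v}ᶜ) := by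
    refine isSecPartition_insertSingletons bot_ne_top ?_ ?_ fun x hx => ?_
    · obtain ⟨w, hw⟩ := exists_ne v
      exact ⟨w, hw⟩
    · simp [isSecureDominating_bot_iff]
    · obtain rfl : x = v := by simpa using hx
      rw [isSecureDominating_bot_iff, Set.insert_eq, Set.union_compl_self]
  refine SEC_eq_of_isSecPartition hpart ?_ fun σ hσ =>
    hσ.card_le_two_of_bot (by rwa [Nat.card_eq_fintype_card])
  rw [card_insertSingletons, compl_compl, Set.ncard_singleton]

lemma two_le_ncard_compl_of_not_isSecureDominating [Finite V] {U : Set V}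
    (hadj : ∀ x ∉ U, ∃ y, G.Adj x y) (hU : ¬ IsSecureDominating G U) : 2 ≤ Uᶜ.ncard := by
  by_contra! h
  obtain h | ⟨x, hx⟩ := (Set.ncard_le_one_iff_eq (Set.toFinite _)).1 (Nat.le_of_lt_succ h)
  · exact hU (Set.compl_empty_iff.1 h ▸ isSecureDominating_univ G)
  · rw [compl_eq_comm] at hx
    obtain ⟨y, hy⟩ := hadj x (by simp [← hx])
    exact hU (hx ▸ isSecureDominating_compl_singleton hy)

lemma exists_isSecPartition_three_le_card [Finite V] (hbot : G ≠ ⊥) (htop : G ≠ ⊤) :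
    ∃ π, IsSecPartition G π ∧ 3 ≤ π.card := by
  obtain ⟨a, b, hab⟩ := SimpleGraph.ne_bot_iff_exists_adj.1 hbot
  set I : Set V := {v | ∀ u, ¬ G.Adj v u}
  have hI : ¬ IsSecureDominating G I := fun h => by
    obtain ⟨u, hu, hua⟩ := h.1 a fun ha => ha b hab
    exact hu a hua
  obtain ⟨U, hIU, hU⟩ := Finite.exists_le_maximal (p := fun A => ¬ IsSecureDominating G A) hI
  have hins (x : V) (hx : x ∉ U) : IsSecureDominating G (insert x U) := by
    by_contra h
    exact hx (hU.2 h (Set.subset_insert x U) (Set.mem_insert x U))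
  have hne : U.Nonempty := by
    rw [Set.nonempty_iff_ne_empty]
    rintro rfl
    exact hU.2 (mt isSecureDominating_singleton_iff.1 htop) (Set.empty_subset {a}) rfl
  have hadj (x : V) (hx : x ∉ U) : ∃ y, G.Adj x y := by
    by_contra! h
    exact hx (hIU h)
  refine ⟨_, isSecPartition_insertSingletons htop hne hU.1 hins, ?_⟩
  rw [card_insertSingletons]
  have := two_le_ncard_compl_of_not_isSecureDominating hadj hU.1
  omega

lemma three_le_SEC [Fintype V] (h3 : 3 ≤ Fintype.card V) (hbot : G ≠ ⊥) : 3 ≤ SEC G := by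
  obtain rfl | htop := eq_or_ne G ⊤
  · have : Nonempty V := Fintype.card_pos_iff.1 (by omega)
    rwa [SEC_top]
  · obtain ⟨π, hπ, hcard⟩ := exists_isSecPartition_three_le_card hbot htop
    exact hcard.trans hπ.card_le_SEC

lemma eq_top_of_card_eq_two [Fintype V] (hcard : Fintype.card V = 2) (hbot : G ≠ ⊥) :
    G = ⊤ := by
  classical
  obtain ⟨a, b, hab⟩ := SimpleGraph.ne_bot_iff_exists_adj.1 hbot
  have huniv : ({a, b} : Finset V) = Finset.univ :=
    Finset.eq_univ_of_card _ (by rw [Finset.card_pair (G.ne_of_adj hab), hcard])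
  ext x y
  refine ⟨G.ne_of_adj, fun hxy => ?_⟩
  have hx : x ∈ ({a, b} : Finset V) := huniv ▸ Finset.mem_univ x
  have hy : y ∈ ({a, b} : Finset V) := huniv ▸ Finset.mem_univ y
  simp only [Finset.mem_insert, Finset.mem_singleton] at hx hy
  rcases hx with rfl | rfl <;> rcases hy with rfl | rfl
  exacts [(hxy rfl).elim, hab, hab.symm, (hxy rfl).elim]

end SecCoal

open SecCoal
theorem stmt4 {V : Type*} [Fintype V] (G : SimpleGraph V)
    (hn : 2 ≤ Fintype.card V) :
    SEC G = 2 ↔ ((Fintype.card V = 2 ∧ G = ⊤) ∨ G = ⊥) := by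
  obtain rfl | hbot := eq_or_ne G ⊥
  · simp [SEC_bot hn]
  obtain hcard | h3 := eq_or_lt_of_le hn
  · have htop := eq_top_of_card_eq_two hcard.symm hbot
    subst htop
    have : Nonempty V := Fintype.card_pos_iff.1 (by omega)
    simp [SEC_top, ← hcard]
  · have := three_le_SEC h3 hbot
    simp only [hbot, or_false]
    omega
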